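/- arXiv:2305.09247 — 5 statements merged into one kernel-verified Lean document; each statement's English description precedes it below -/
import Mathlib

section
/- Fix a real number p with 0 < p < 1/2. There exists a constant C > 0 such that for every integer t ≥ 1, η(t, ⌈t/2⌉, p) ≤ C · t^{-1/2} · (2·√(p(1-p)))^t. -/
/-- `eta t m p = Σ_{k=m}^{t} (t choose k) · p^k · (1-p)^{t-k}`,
the upper tail of the Binomial(t,p) distribution. -/
noncomputable def eta (t m : ℕ) (p : ℝ) : ℝ :=
  ∑ k ∈ Finset.Icc m t, (t.choose k : ℝ) * p ^ k * (1 - p) ^ (t - k)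


lemma wallis (n : ℕ) : ((n.centralBinom : ℝ))^2 * (2*n+1) ≤ 16^n := by
  induction n with
  | zero => simp [Nat.centralBinom]
  | succ n ih =>
    have key : ((n+1 : ℕ) : ℝ) * (n+1).centralBinom = 2 * (2*n+1) * n.centralBinom := by
      exact_mod_cast congrArg (Nat.cast : ℕ → ℝ) (Nat.succ_mul_centralBinom_succ n)
    have hp : (0:ℝ) ≤ (16:ℝ)^n := by positivity
    have hc : (0:ℝ) ≤ (n.centralBinom : ℝ) := Nat.cast_nonneg _
    have h2 : ((n:ℝ)+1)^2 * (((n+1).centralBinom : ℝ)^2 * (2*((n:ℝ)+1)+1)) ≤ ((n:ℝ)+1)^2 * 16^(n+1) := by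
      push_cast at key
      rw [pow_succ (16:ℝ) n]
      have sq_eq : (((n:ℝ)+1) * ((n+1).centralBinom : ℝ))^2 = (2*(2*(n:ℝ)+1)*(n.centralBinom:ℝ))^2 := by rw [key]
      have hmul := mul_le_mul_of_nonneg_left ih (show (0:ℝ) ≤ 4*(2*(n:ℝ)+1)*(2*(n:ℝ)+3) by positivity)
      nlinarith [hmul, sq_eq, hp]
    have h3 := le_of_mul_le_mul_left h2 (by positivity : (0:ℝ) < ((n:ℝ)+1)^2)
    push_cast
    convert h3 using 2

lemma centralBinom_le_real (n : ℕ) : (n.centralBinom : ℝ) ≤ 4^n / Real.sqrt (2*n+1) := by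
  have h0 : (0:ℝ) < 2*(n:ℝ)+1 := by positivity
  have h1 : ((n.centralBinom : ℝ))^2 ≤ 16^n / (2*n+1) := by
    rw [le_div_iff₀ h0]; exact wallis n
  have h2 : (n.centralBinom : ℝ) = Real.sqrt (((n.centralBinom : ℝ))^2) :=
    (Real.sqrt_sq (Nat.cast_nonneg _)).symm
  rw [h2]
  calc Real.sqrt (((n.centralBinom : ℝ))^2) ≤ Real.sqrt (16^n / (2*n+1)) :=
        Real.sqrt_le_sqrt h1
    _ = Real.sqrt (16^n) / Real.sqrt (2*n+1) := Real.sqrt_div (by positivity) _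
    _ = 4^n / Real.sqrt (2*n+1) := by
        congr 1
        have h16 : ((4:ℝ)^n)^2 = 16^n := by
          rw [← pow_mul, mul_comm n 2, pow_mul]; norm_num
        rw [← h16, Real.sqrt_sq (by positivity)]

lemma sqrt_mono' {a b : ℝ} (h : a ≤ b) : Real.sqrt a ≤ Real.sqrt b := Real.sqrt_le_sqrt h

lemma choose_half_le (t : ℕ) (ht : 1 ≤ t) : (t.choose ((t+1)/2) : ℝ) ≤ 2^t / Real.sqrt t := by
  rcases Nat.even_or_odd t with ⟨n, hn⟩ | ⟨n, hn⟩
  · -- t = n + n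
    have hn2 : t = 2*n := by omega
    have hm : (t+1)/2 = n := by omega
    have hn1 : 1 ≤ n := by omega
    have hcb : t.choose ((t+1)/2) = n.centralBinom := by
      rw [hm, hn2]; rfl
    rw [hcb]
    calc (n.centralBinom : ℝ) ≤ 4^n / Real.sqrt (2*n+1) := centralBinom_le_real n
      _ ≤ 4^n / Real.sqrt (2*n) := by
          apply div_le_div_of_nonneg_left (by positivity) _ (sqrt_mono' (by linarith))
          apply Real.sqrt_pos.2; push_cast; positivity
      _ = 2^t / Real.sqrt t := by
          rw [hn2]
          congr 1
          · rw [show (4:ℝ) = 2^2 by norm_num, ← pow_mul]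
          · congr 1; push_cast; ring
  · -- t = 2n+1
    have hm : (t+1)/2 = n+1 := by omega
    have hkey : 2 * t.choose (n+1) = (n+1).centralBinom := by
      have hsymm : t.choose n = t.choose (n+1) := by
        have := Nat.choose_symm (show n+1 ≤ t by omega)
        rwa [show t - (n+1) = n by omega] at this
      have hpas : (t+1).choose (n+1) = t.choose n + t.choose (n+1) := Nat.choose_succ_succ t n
      have : (n+1).centralBinom = (t+1).choose (n+1) := by
        unfold Nat.centralBinom; congr 1; omega
      omega
    rw [hm]
    have hc : (t.choose (n+1) : ℝ) = ((n+1).centralBinom : ℝ) / 2 := by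
      have h' : (2:ℝ) * t.choose (n+1) = (n+1).centralBinom := by exact_mod_cast congrArg (Nat.cast : ℕ → ℝ) hkey
      field_simp
      linarith
    rw [hc]
    have hcb := centralBinom_le_real (n+1)
    push_cast at hcb
    calc ((n+1).centralBinom : ℝ) / 2 ≤ (4^(n+1) / Real.sqrt (2*((n:ℝ)+1)+1)) / 2 := by
          apply div_le_div_of_nonneg_right hcb (by norm_num)
      _ = 2^t / Real.sqrt (2*((n:ℝ)+1)+1) := by
          rw [hn, div_div, div_eq_div_iff (by positivity) (by positivity)]
          rw [show (4:ℝ) = 2^2 by norm_num, ← pow_mul]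
          rw [show 2*(n+1) = (2*n+1)+1 by ring, pow_succ]
          ring
      _ ≤ 2^t / Real.sqrt t := by
          apply div_le_div_of_nonneg_left (by positivity) _ (sqrt_mono' _)
          · apply Real.sqrt_pos.2; rw [hn]; push_cast; positivity
          · rw [hn]; push_cast; linarith

lemma pow_half_le (p : ℝ) (hp0 : 0 < p) (hp1 : p < 1/2) (t : ℕ) :
    p ^ ((t+1)/2) * (1-p) ^ (t - (t+1)/2) ≤ Real.sqrt (p * (1-p)) ^ t := by
  have hq0 : (0:ℝ) < 1 - p := by linarith
  have hpq : 0 ≤ p * (1-p) := by positivity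
  have hsq : Real.sqrt (p*(1-p)) ^ 2 = p*(1-p) := Real.sq_sqrt hpq
  rcases Nat.even_or_odd t with ⟨n, hn⟩ | ⟨n, hn⟩
  · have hm : (t+1)/2 = n := by omega
    rw [hm, show t - n = n by omega, hn, show n + n = 2*n by ring, pow_mul, hsq, ← mul_pow]
  · have hm : (t+1)/2 = n+1 := by omega
    have hm2 : t - (t+1)/2 = n := by omega
    have hple : p ≤ Real.sqrt (p*(1-p)) := by
      rw [Real.le_sqrt hp0.le hpq]
      nlinarith
    have hr : Real.sqrt (p*(1-p)) ^ (2*n+1) = (p*(1-p))^n * Real.sqrt (p*(1-p)) := by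
      rw [pow_succ, pow_mul, hsq]
    rw [hm, show t - (n+1) = n by omega, hn, hr]
    calc p^(n+1) * (1-p)^n = (p*(1-p))^n * p := by rw [mul_pow]; ring
      _ ≤ (p*(1-p))^n * Real.sqrt (p*(1-p)) := by
          apply mul_le_mul_of_nonneg_left hple (by positivity)

theorem stmt_0 (p : ℝ) (hp0 : 0 < p) (hp1 : p < 1 / 2) :
    ∃ C : ℝ, 0 < C ∧ ∀ t : ℕ, 1 ≤ t →
      eta t ((t + 1) / 2) p ≤ C / Real.sqrt t * (2 * Real.sqrt (p * (1 - p))) ^ t := by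
  have hq0 : (0:ℝ) < 1 - p := by linarith
  set q : ℝ := 1 - p with hq
  have hr0 : 0 ≤ p / q := by positivity
  have hr1 : p / q < 1 := by rw [div_lt_one hq0]; linarith
  have hC : (0:ℝ) < 1 - p/q := by linarith
  refine ⟨1 / (1 - p/q), by positivity, fun t ht => ?_⟩
  set m := (t+1)/2 with hmdef
  set f : ℕ → ℝ := fun k => (t.choose k : ℝ) * p ^ k * q ^ (t - k) with hf
  have hfnn : ∀ k, 0 ≤ f k := fun k => by simp only [hf]; positivity
  -- step inequality
  have step : ∀ k, m ≤ k → k < t → f (k+1) ≤ f k * (p/q) := by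
    intro k hmk hkt
    have hchoose : t.choose (k+1) ≤ t.choose k := by
      have h1 : t.choose (k+1) * (k+1) = t.choose k * (t - k) := Nat.choose_succ_right_eq t k
      have h2 : t - k ≤ k + 1 := by omega
      have h3 : t.choose (k+1) * (k+1) ≤ t.choose k * (k+1) :=
        h1 ▸ Nat.mul_le_mul_left _ h2
      exact Nat.le_of_mul_le_mul_right h3 (by omega)
    have hexp : t - k = (t - (k+1)) + 1 := by omega
    have heq : f k * (p/q) = (t.choose k : ℝ) * p^(k+1) * q^(t-(k+1)) := by
      simp only [hf]
      rw [hexp, pow_succ, pow_succ]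
      field_simp
    rw [heq]
    simp only [hf]
    have : (t.choose (k+1) : ℝ) ≤ (t.choose k : ℝ) := by exact_mod_cast hchoose
    apply mul_le_mul_of_nonneg_right _ (by positivity)
    apply mul_le_mul_of_nonneg_right this (by positivity)
  -- iterate
  have iter : ∀ j, m + j ≤ t → f (m+j) ≤ f m * (p/q)^j := by
    intro j
    induction j with
    | zero => intro _; simp
    | succ j ih =>
      intro hj
      have h1 : f (m+j+1) ≤ f (m+j) * (p/q) := step (m+j) (by omega) (by omega)
      calc f (m+(j+1)) = f (m+j+1) := rfl
        _ ≤ f (m+j) * (p/q) := h1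
        _ ≤ (f m * (p/q)^j) * (p/q) := mul_le_mul_of_nonneg_right (ih (by omega)) hr0
        _ = f m * (p/q)^(j+1) := by ring
  -- sum bound
  have hmt : m ≤ t := by omega
  have hsum : eta t m p ≤ f m * (1/(1 - p/q)) := by
    have h1 : eta t m p = ∑ k ∈ Finset.Icc m t, f k := rfl
    rw [h1, ← Finset.Ico_add_one_right_eq_Icc, Finset.sum_Ico_eq_sum_range]
    have h2 : ∑ i ∈ Finset.range (t+1-m), f (m+i) ≤ ∑ i ∈ Finset.range (t+1-m), f m * (p/q)^i := by
      apply Finset.sum_le_sum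
      intro i hi
      simp only [Finset.mem_range] at hi
      exact iter i (by omega)
    refine h2.trans ?_
    rw [← Finset.mul_sum]
    apply mul_le_mul_of_nonneg_left _ (hfnn m)
    -- geometric sum
    have hgm := geom_sum_mul (p/q) (t+1-m)
    have hle : (∑ i ∈ Finset.range (t+1-m), (p/q)^i) * (1 - p/q) ≤ 1 := by
      have heq2 : (∑ i ∈ Finset.range (t+1-m), (p/q)^i) * (1 - p/q) = 1 - (p/q)^(t+1-m) := by
        linear_combination -hgm
      rw [heq2]
      have : (0:ℝ) ≤ (p/q)^(t+1-m) := by positivity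
      linarith
    rw [le_div_iff₀ hC]
    exact hle
  -- bound f m
  have hfm : f m ≤ (2^t / Real.sqrt t) * Real.sqrt (p*q) ^ t := by
    simp only [hf]
    rw [mul_assoc]
    apply mul_le_mul (choose_half_le t ht) (pow_half_le p hp0 hp1 t) (by positivity) (by positivity)
  calc eta t m p ≤ f m * (1/(1 - p/q)) := hsum
    _ ≤ ((2^t / Real.sqrt t) * Real.sqrt (p*q) ^ t) * (1/(1 - p/q)) := by
        apply mul_le_mul_of_nonneg_right hfm (by positivity)
    _ = 1/(1 - p/q) / Real.sqrt t * (2 * Real.sqrt (p * q)) ^ t := by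
        rw [mul_pow]
        ring
end

section
/- Fix a real number p with 0 < p < 1/2. There exists a constant c > 0 such that for every integer t ≥ 1, η(t, ⌈t/2⌉, p) ≥ c · t^{-1/2} · (2·√(p(1-p)))^t. -/
lemma lemA : ∀ n : ℕ, 1 ≤ n → 16 ^ n ≤ 4 * n * (Nat.centralBinom n) ^ 2 := by
  intro n
  induction n with
  | zero => omega
  | succ m ih =>
    intro _
    rcases Nat.eq_zero_or_pos m with hm | hm
    · subst hm; decide
    · have ih' := ih hm
      have key := Nat.succ_mul_centralBinom_succ m
      have hmul : (m + 1) * (16 ^ (m + 1)) ≤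
          (m + 1) * (4 * (m + 1) * (Nat.centralBinom (m+1)) ^ 2) := by
        have h2 : (m + 1) * (4 * (m + 1) * (Nat.centralBinom (m+1)) ^ 2)
            = 4 * ((m+1) * Nat.centralBinom (m+1)) ^ 2 := by ring
        rw [h2, key]
        calc (m + 1) * 16 ^ (m + 1) = 16 * (m+1) * 16 ^ m := by ring
          _ ≤ 16 * (m+1) * (4 * m * (Nat.centralBinom m) ^ 2) :=
              Nat.mul_le_mul_left _ ih'
          _ ≤ 4 * (2 * (2 * m + 1) * Nat.centralBinom m) ^ 2 := by
              nlinarith [Nat.zero_le ((Nat.centralBinom m) ^ 2)]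
      exact Nat.le_of_mul_le_mul_left hmul (Nat.succ_pos m)

lemma lemB (n : ℕ) (hn : 1 ≤ n) : (4:ℝ) ^ n ≤ 2 * Real.sqrt n * Nat.centralBinom n := by
  have h := lemA n hn
  have h' : ((16:ℝ)) ^ n ≤ 4 * n * (Nat.centralBinom n) ^ 2 := by exact_mod_cast h
  have hb : (0:ℝ) ≤ 2 * Real.sqrt n * Nat.centralBinom n := by positivity
  have hsq : ((4:ℝ) ^ n) ^ 2 ≤ (2 * Real.sqrt n * Nat.centralBinom n) ^ 2 := by
    have hs : (Real.sqrt n) ^ 2 = n := Real.sq_sqrt (by positivity)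
    calc ((4:ℝ) ^ n) ^ 2 = 16 ^ n := by rw [← pow_mul, pow_mul']; norm_num
    _ ≤ 4 * n * (Nat.centralBinom n) ^ 2 := h'
    _ = (2 * Real.sqrt n * Nat.centralBinom n) ^ 2 := by rw [mul_pow, mul_pow, hs]; ring
  calc (4:ℝ) ^ n = Real.sqrt (((4:ℝ) ^ n) ^ 2) := (Real.sqrt_sq (by positivity)).symm
    _ ≤ Real.sqrt ((2 * Real.sqrt n * Nat.centralBinom n) ^ 2) := Real.sqrt_le_sqrt hsq
    _ = 2 * Real.sqrt n * Nat.centralBinom n := Real.sqrt_sq hb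

theorem stmt_1 (p : ℝ) (hp0 : 0 < p) (hp1 : p < 1 / 2) :
    ∃ c : ℝ, 0 < c ∧ ∀ t : ℕ, 1 ≤ t →
      c / Real.sqrt t * (2 * Real.sqrt (p * (1 - p))) ^ t ≤ eta t ((t + 1) / 2) p := by
  set q := 1 - p with hq
  have hq0 : 0 < q := by rw [hq]; linarith
  have hpq : p < q := by rw [hq]; linarith
  set c := Real.sqrt p / (2 * Real.sqrt q) with hc
  have hc0 : 0 < c := by positivity
  have hchalf : c < 1 / 2 := by
    rw [hc, div_lt_div_iff₀ (by positivity) (by norm_num)]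
    have := Real.sqrt_lt_sqrt hp0.le hpq
    nlinarith [Real.sqrt_nonneg p]
  clear_value q c
  have hpq0 : (0:ℝ) < p * q := mul_pos hp0 hq0
  refine ⟨c, hc0, ?_⟩
  intro t ht
  set m := (t + 1) / 2 with hm
  clear_value m
  have hmt : m ≤ t := by omega
  -- single term bound
  have hterm : (t.choose m : ℝ) * p ^ m * q ^ (t - m) ≤ eta t m p := by
    rw [eta, hq]
    have hmem : m ∈ Finset.Icc m t := Finset.mem_Icc.mpr ⟨le_rfl, hmt⟩
    refine Finset.single_le_sum
      (f := fun k => (t.choose k : ℝ) * p ^ k * (1 - p) ^ (t - k)) ?_ hmem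
    intro i _
    have h1p : (0:ℝ) ≤ (1 - p) := by linarith
    positivity
  refine le_trans ?_ hterm
  have hs2 : Real.sqrt (p * q) ^ 2 = p * q := Real.sq_sqrt hpq0.le
  have hs0 : 0 < Real.sqrt (p * q) := Real.sqrt_pos.mpr hpq0
  rcases Nat.even_or_odd t with ⟨n, hn⟩ | ⟨n, hn⟩
  · -- t = 2n, n ≥ 1, m = n
    have hn1 : 1 ≤ n := by omega
    have hmn : m = n := by omega
    have htm : t - m = n := by omega
    have hchN : t.choose m = Nat.centralBinom n := by
      rw [hn, hmn]; unfold Nat.centralBinom; rw [two_mul]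
    rw [hchN, htm, hmn]
    have hexp : (2 * Real.sqrt (p * q)) ^ t = 4 ^ n * (p * q) ^ n := by
      calc (2 * Real.sqrt (p * q)) ^ t = 2 ^ (2 * n) * Real.sqrt (p * q) ^ (2 * n) := by
            rw [hn, ← two_mul, mul_pow]
        _ = 4 ^ n * (p * q) ^ n := by rw [pow_mul, pow_mul, hs2]; norm_num
    rw [hexp]
    have hB := lemB n hn1
    have hcb : (0:ℝ) < Nat.centralBinom n := by exact_mod_cast Nat.centralBinom_pos n
    have hsn : (0:ℝ) < Real.sqrt n := Real.sqrt_pos.mpr (by exact_mod_cast hn1)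
    have hst : Real.sqrt n ≤ Real.sqrt t :=
      Real.sqrt_le_sqrt (by exact_mod_cast (by omega : n ≤ t))
    have hst0 : (0:ℝ) < Real.sqrt t := lt_of_lt_of_le hsn hst
    have key : c / Real.sqrt t * 4 ^ n ≤ Nat.centralBinom n := by
      rw [div_mul_eq_mul_div, div_le_iff₀ hst0]
      calc c * 4 ^ n ≤ (1/2) * 4 ^ n :=
            mul_le_mul_of_nonneg_right hchalf.le (by positivity)
        _ ≤ (1/2) * (2 * Real.sqrt n * Nat.centralBinom n) :=
            mul_le_mul_of_nonneg_left hB (by norm_num)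
        _ = (Nat.centralBinom n : ℝ) * Real.sqrt n := by ring
        _ ≤ (Nat.centralBinom n : ℝ) * Real.sqrt t :=
            mul_le_mul_of_nonneg_left hst hcb.le
    calc c / Real.sqrt t * (4 ^ n * (p * q) ^ n)
        = (c / Real.sqrt t * 4 ^ n) * (p * q) ^ n := by ring
      _ ≤ (Nat.centralBinom n : ℝ) * (p * q) ^ n :=
          mul_le_mul_of_nonneg_right key (pow_nonneg hpq0.le n)
      _ = (Nat.centralBinom n : ℝ) * p ^ n * q ^ n := by rw [mul_pow]; ring
  · -- t = 2n+1, m = n+1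
    have hmn : m = n + 1 := by omega
    have htm : t - m = n := by omega
    have hchooseN : Nat.centralBinom (n+1) = 2 * t.choose m := by
      rw [Nat.centralBinom, hmn, hn]
      have e1 : 2 * (n + 1) = (2 * n + 1) + 1 := by ring
      rw [e1, Nat.choose_succ_succ', Nat.choose_symm_half]
      omega
    have hch : (2:ℝ) * (t.choose m) = Nat.centralBinom (n + 1) := by
      rw [hchooseN]; push_cast; ring
    have h2cs : 2 * c * Real.sqrt (p * q) = p := by
      have hsq0 : Real.sqrt q ≠ 0 := ne_of_gt (Real.sqrt_pos.mpr hq0)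
      have e1 : Real.sqrt p * Real.sqrt p = p := Real.mul_self_sqrt hp0.le
      rw [hc, Real.sqrt_mul hp0.le]
      calc 2 * (Real.sqrt p / (2 * Real.sqrt q)) * (Real.sqrt p * Real.sqrt q)
          = (Real.sqrt p * Real.sqrt p) * (Real.sqrt q / Real.sqrt q) := by ring
        _ = p := by rw [div_self hsq0, e1, mul_one]
    have hexp : (2 * Real.sqrt (p * q)) ^ t
        = 2 * 4 ^ n * (p * q) ^ n * Real.sqrt (p * q) := by
      calc (2 * Real.sqrt (p * q)) ^ t
          = (2 * Real.sqrt (p * q)) ^ (2 * n) * (2 * Real.sqrt (p * q)) := by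
            rw [hn, pow_succ]
        _ = 2 ^ (2 * n) * Real.sqrt (p * q) ^ (2 * n) * (2 * Real.sqrt (p * q)) := by
            rw [mul_pow]
        _ = 4 ^ n * (p * q) ^ n * (2 * Real.sqrt (p * q)) := by
            rw [pow_mul, pow_mul, hs2]; norm_num
        _ = 2 * 4 ^ n * (p * q) ^ n * Real.sqrt (p * q) := by ring
    have hB := lemB (n + 1) (by omega)
    push_cast at hB
    have hC0 : (0:ℝ) ≤ (t.choose m : ℝ) := Nat.cast_nonneg _
    have hCb : (4:ℝ) ^ n ≤ Real.sqrt ((n:ℝ) + 1) * (t.choose m) := by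
      rw [← hch] at hB
      have h4 : (4:ℝ) ^ (n + 1) = 4 ^ n * 4 := pow_succ 4 n
      nlinarith [hB]
    have hsn : (0:ℝ) < Real.sqrt ((n:ℝ) + 1) := Real.sqrt_pos.mpr (by positivity)
    have hst : Real.sqrt ((n:ℝ) + 1) ≤ Real.sqrt t := by
      apply Real.sqrt_le_sqrt
      have : (n:ℝ) + 1 ≤ (t:ℝ) := by exact_mod_cast (by omega : n + 1 ≤ t)
      linarith
    have hst0 : (0:ℝ) < Real.sqrt t := lt_of_lt_of_le hsn hst
    have hkey : c / Real.sqrt t * (2 * 4 ^ n * Real.sqrt (p * q))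
        ≤ (t.choose m : ℝ) * p := by
      have enum : c * (2 * 4 ^ n * Real.sqrt (p * q)) = p * 4 ^ n := by
        linear_combination (4:ℝ) ^ n * h2cs
      have e : c / Real.sqrt t * (2 * 4 ^ n * Real.sqrt (p * q))
          = p * 4 ^ n / Real.sqrt t := by
        rw [div_mul_eq_mul_div, enum]
      rw [e, div_le_iff₀ hst0]
      have h1 : p * 4 ^ n ≤ p * (Real.sqrt ((n:ℝ) + 1) * (t.choose m)) :=
        mul_le_mul_of_nonneg_left hCb hp0.le
      have h2 : p * (Real.sqrt ((n:ℝ) + 1) * (t.choose m))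
          ≤ (t.choose m : ℝ) * p * Real.sqrt t := by
        nlinarith [mul_le_mul_of_nonneg_left hst
          (mul_nonneg hp0.le hC0)]
      linarith
    rw [htm, hmn, hexp]
    rw [hmn] at hkey
    calc c / Real.sqrt t * (2 * 4 ^ n * (p * q) ^ n * Real.sqrt (p * q))
        = (c / Real.sqrt t * (2 * 4 ^ n * Real.sqrt (p * q))) * (p * q) ^ n := by ring
      _ ≤ ((t.choose (n + 1) : ℝ) * p) * (p * q) ^ n :=
          mul_le_mul_of_nonneg_right hkey (pow_nonneg hpq0.le n)
      _ = (t.choose (n + 1) : ℝ) * p ^ (n + 1) * q ^ n := by rw [mul_pow]; ring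
end

section
/- Let (X_i)_{i ∈ ℕ} be an i.i.d. sequence of real-valued random variables, let a ≤ b be reals, and set p_L = P(X_1 < a), p_U = P(X_1 > b) and p_max = max(p_L, p_U). Assume 0 < p_max < 1/2 and write r = 2·√(p_max(1-p_max)). Then there exist constants c_1, c_2 > 0 such that for every odd positive integer t, c_1 · t^{-1/2} · r^t ≤ P(Error_t) ≤ c_2 · t^{-1/2} · r^t. -/
open MeasureTheory ProbabilityTheory

/-- The median of `t` reals: the `⌈t/2⌉`-th smallest among them. -/
noncomputable def median (t : ℕ) (x : Fin t → ℝ) : ℝ :=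
  ((Finset.univ.val.map x).sort (· ≤ ·)).getD ((t + 1) / 2 - 1) 0

/-- `Error_t`: the event that the median of `X_1, …, X_t` is `< a` or `> b`. -/
def errorEvent {Ω : Type*} (X : ℕ → Ω → ℝ) (a b : ℝ) (t : ℕ) : Set Ω :=
  {ω | median t (fun i : Fin t => X i ω) < a ∨ b < median t (fun i : Fin t => X i ω)}

/-!
For `t = 2m + 1` the median is `< a` exactly when at least `m + 1` of the samples are, so
`Error_t` is the union of two events of the form `{Bin(t, p) ≥ m + 1}` with `p = p_L, p_U`.
Such a tail is at least its first term `C(t, m+1) p^(m+1) (1-p)^m` and, for `p < 1/2`, at most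
`(1-p)/(1-2p)` times it (the terms decay geometrically with ratio `p/(1-p)`). Since
`r^t = r (4 p (1-p))^m`, the first term is `≍ t^(-1/2) r^t` by the Wallis-type bounds
`16^n ≤ 4n C(2n,n)^2` and `(2n+1) C(2n,n)^2 ≤ 16^n`.
-/

open Finset

theorem List.Pairwise.lt_countP_iff {α : Type*} [Preorder α] {P : α → Prop} [DecidablePred P]
    (hP : ∀ x y, x ≤ y → P y → P x) {l : List α} (hl : l.Pairwise (· ≤ ·)) {i : ℕ}
    (hi : i < l.length) : i < l.countP (P ·) ↔ P l[i] := by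
  induction l generalizing i with
  | nil => simp at hi
  | cons x xs ih =>
    by_cases hx : P x
    · cases i with
      | zero => simp [hx]
      | succ j => simp [hx, ← ih hl.of_cons (by simpa using hi)]
    · have hall : ∀ y ∈ x :: xs, ¬P y := fun y hy hy' =>
        hx (by rcases List.mem_cons.mp hy with rfl | hy
               exacts [hy', hP x y (List.rel_of_pairwise_cons hl hy) hy'])
      rw [List.countP_eq_zero.mpr (by simpa using hall)]
      simpa using hall _ (List.getElem_mem hi)

theorem length_sort_map_univ {t : ℕ} (x : Fin t → ℝ) : ((univ.val.map x).sort (· ≤ ·)).length = t := by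
  simp

theorem countP_sort_map_univ {t : ℕ} (x : Fin t → ℝ) (P : ℝ → Prop) [DecidablePred P] :
    ((univ.val.map x).sort (· ≤ ·)).countP (P ·) = #{i | P (x i)} := by
  rw [← Multiset.coe_countP, Multiset.sort_eq, Multiset.countP_map]
  rfl

theorem median_lt_iff {m : ℕ} (x : Fin (2 * m + 1) → ℝ) (a : ℝ) :
    median (2 * m + 1) x < a ↔ m + 1 ≤ #{i | x i < a} := by
  have hm : m < ((univ.val.map x).sort (· ≤ ·)).length := by rw [length_sort_map_univ]; omega
  rw [median, show (2 * m + 1 + 1) / 2 - 1 = m by omega, List.getD_eq_getElem _ _ hm,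
    ← (Multiset.pairwise_sort _ _).lt_countP_iff (fun _ _ => lt_of_le_of_lt) hm,
    countP_sort_map_univ x (· < a), Nat.succ_le_iff]

theorem lt_median_iff {m : ℕ} (x : Fin (2 * m + 1) → ℝ) (b : ℝ) :
    b < median (2 * m + 1) x ↔ m + 1 ≤ #{i | b < x i} := by
  have hm : m < ((univ.val.map x).sort (· ≤ ·)).length := by rw [length_sort_map_univ]; omega
  have hsplit := List.length_eq_countP_add_countP (fun y => decide (y ≤ b))
    (l := (univ.val.map x).sort (· ≤ ·))
  simp only [decide_eq_true_eq, not_le] at hsplit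
  rw [length_sort_map_univ, countP_sort_map_univ x (· ≤ b), countP_sort_map_univ x (b < ·)]
    at hsplit
  rw [median, show (2 * m + 1 + 1) / 2 - 1 = m by omega, List.getD_eq_getElem _ _ hm, ← not_le,
    ← (Multiset.pairwise_sort _ _).lt_countP_iff (fun _ _ => le_trans) hm,
    countP_sort_map_univ x (· ≤ b)]
  omega

def majorityEvent {Ω β : Type*} (X : ℕ → Ω → β) (P : β → Prop) [DecidablePred P]
    (m : ℕ) : Set Ω :=
  {ω | m + 1 ≤ #{i : Fin (2 * m + 1) | P (X i ω)}}

theorem errorEvent_eq_majorityEvent_union {Ω : Type*} (X : ℕ → Ω → ℝ) (a b : ℝ) (m : ℕ) :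
    errorEvent X a b (2 * m + 1) = majorityEvent X (· < a) m ∪ majorityEvent X (b < ·) m := by
  ext ω
  simp only [errorEvent, majorityEvent, Set.mem_ofPred_eq, Set.mem_union, median_lt_iff,
    lt_median_iff]

namespace Nat

theorem mul_centralBinom_sq_le (n : ℕ) : (2 * n + 1) * n.centralBinom ^ 2 ≤ 16 ^ n := by
  induction n with
  | zero => simp
  | succ n ih =>
    refine Nat.le_of_mul_le_mul_left (c := (n + 1) ^ 2) ?_ (by positivity)
    calc (n + 1) ^ 2 * ((2 * (n + 1) + 1) * (n + 1).centralBinom ^ 2)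
        = (2 * n + 3) * ((n + 1) * (n + 1).centralBinom) ^ 2 := by ring
      _ = 4 * (2 * n + 1) * (2 * n + 3) * ((2 * n + 1) * n.centralBinom ^ 2) := by
          rw [succ_mul_centralBinom_succ]; ring
      _ ≤ 4 * (2 * n + 1) * (2 * n + 3) * 16 ^ n := by gcongr
      _ ≤ 16 * (n + 1) ^ 2 * 16 ^ n := Nat.mul_le_mul_right _ (by nlinarith)
      _ = (n + 1) ^ 2 * 16 ^ (n + 1) := by ring

theorem sixteen_pow_le_mul_centralBinom_sq {n : ℕ} (hn : 0 < n) :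
    16 ^ n ≤ 4 * n * n.centralBinom ^ 2 := by
  induction n, hn using Nat.le_induction with
  | base => simp [centralBinom, choose]
  | succ n hn ih =>
    refine Nat.le_of_mul_le_mul_left (c := n * (n + 1)) ?_ (by positivity)
    calc n * (n + 1) * 16 ^ (n + 1) = 4 * (4 * n * (n + 1)) * 16 ^ n := by ring
      _ ≤ 4 * (2 * n + 1) ^ 2 * (4 * n * n.centralBinom ^ 2) := by gcongr; nlinarith
      _ = 4 * n * (2 * (2 * n + 1) * n.centralBinom) ^ 2 := by ring
      _ = n * (n + 1) * (4 * (n + 1) * (n + 1).centralBinom ^ 2) := by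
          rw [← succ_mul_centralBinom_succ]; ring

theorem centralBinom_succ_eq_two_mul_choose (m : ℕ) :
    (m + 1).centralBinom = 2 * (2 * m + 1).choose (m + 1) := by
  rw [centralBinom, show 2 * (m + 1) = 2 * m + 1 + 1 by ring, choose_succ_succ',
    choose_symm_half]
  ring

end Nat

theorem four_pow_div_sqrt_le_choose (m : ℕ) :
    4 ^ m / √(2 * m + 1) ≤ (2 * m + 1).choose (m + 1) := by
  have h : (16:ℝ) ^ (m + 1) ≤ 4 * (m + 1) * (2 * ((2 * m + 1).choose (m + 1) : ℝ)) ^ 2 := by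
    exact_mod_cast Nat.centralBinom_succ_eq_two_mul_choose m ▸
      Nat.sixteen_pow_le_mul_centralBinom_sq m.succ_pos
  have h16 : ((4:ℝ) ^ m) ^ 2 = 16 ^ m := by rw [← pow_mul, pow_mul']; norm_num
  rw [div_le_iff₀ (by positivity), ← pow_le_pow_iff_left₀ (by positivity) (by positivity)
    two_ne_zero, mul_pow, Real.sq_sqrt (by positivity), h16]
  rw [pow_succ (16 : ℝ)] at h
  nlinarith [mul_nonneg m.cast_nonneg (sq_nonneg ((2 * m + 1).choose (m + 1) : ℝ))]

theorem choose_le_two_mul_four_pow_div_sqrt (m : ℕ) :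
    (2 * m + 1).choose (m + 1) ≤ 2 * 4 ^ m / √(2 * m + 1) := by
  have h : (2 * (m + 1) + 1) * (2 * ((2 * m + 1).choose (m + 1) : ℝ)) ^ 2 ≤ 16 ^ (m + 1) := by
    exact_mod_cast Nat.centralBinom_succ_eq_two_mul_choose m ▸ Nat.mul_centralBinom_sq_le (m + 1)
  have h16 : ((4:ℝ) ^ m) ^ 2 = 16 ^ m := by rw [← pow_mul, pow_mul']; norm_num
  rw [le_div_iff₀ (by positivity), ← pow_le_pow_iff_left₀ (by positivity) (by positivity)
    two_ne_zero, mul_pow, mul_pow, Real.sq_sqrt (by positivity), h16]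
  rw [pow_succ (16 : ℝ)] at h
  nlinarith [sq_nonneg ((2 * m + 1).choose (m + 1) : ℝ)]

theorem choose_le_choose_odd_middle (m j : ℕ) :
    (2 * m + 1).choose j ≤ (2 * m + 1).choose (m + 1) := by
  simpa [Nat.choose_symm_half, show (2 * m + 1) / 2 = m by omega] using
    Nat.choose_le_middle j (2 * m + 1)

theorem sum_binomial_tail_le {p : ℝ} (hp0 : 0 ≤ p) (hp : p < 1 / 2) (m : ℕ) :
    ∑ j ∈ Ico (m + 1) (2 * m + 2),
        ((2 * m + 1).choose j : ℝ) * p ^ j * (1 - p) ^ (2 * m + 1 - j)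
      ≤ (2 * m + 1).choose (m + 1) * (p * (1 - p)) ^ (m + 1) / (1 - 2 * p) := by
  have hq : 0 < 1 - p := by linarith
  have hρ : p / (1 - p) < 1 := (div_lt_one hq).mpr (by linarith)
  calc ∑ j ∈ Ico (m + 1) (2 * m + 2),
        ((2 * m + 1).choose j : ℝ) * p ^ j * (1 - p) ^ (2 * m + 1 - j)
      ≤ ∑ j ∈ Ico (m + 1) (2 * m + 2),
          ((2 * m + 1).choose (m + 1) : ℝ) * (1 - p) ^ (2 * m + 1) * (p / (1 - p)) ^ j := by
        refine sum_le_sum fun j hj => ?_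
        have hjt : j ≤ 2 * m + 1 := by simp at hj; omega
        have hpow : p ^ j * (1 - p) ^ (2 * m + 1 - j)
            = (1 - p) ^ (2 * m + 1) * (p / (1 - p)) ^ j := by
          rw [div_pow, ← Nat.sub_add_cancel hjt, pow_add, Nat.add_sub_cancel]
          field_simp
        rw [mul_assoc, hpow, ← mul_assoc]
        gcongr
        exact_mod_cast choose_le_choose_odd_middle m j
    _ = ((2 * m + 1).choose (m + 1) : ℝ) * (1 - p) ^ (2 * m + 1) *
          ∑ j ∈ Ico (m + 1) (2 * m + 2), (p / (1 - p)) ^ j := by rw [mul_sum]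
    _ ≤ ((2 * m + 1).choose (m + 1) : ℝ) * (1 - p) ^ (2 * m + 1) *
          ((p / (1 - p)) ^ (m + 1) / (1 - p / (1 - p))) := by
        gcongr
        exact geom_sum_Ico_le_of_lt_one (by positivity) hρ
    _ = (2 * m + 1).choose (m + 1) * (p * (1 - p)) ^ (m + 1) / (1 - 2 * p) := by
        have h2p : 1 - 2 * p ≠ 0 := by linarith
        rw [show 1 - p / (1 - p) = (1 - 2 * p) / (1 - p) by field_simp; ring, div_pow, mul_pow]
        field_simp
        ring

section CountingEvents

variable {Ω ι β : Type*} [MeasurableSpace Ω] {μ : Measure Ω} [IsProbabilityMeasure μ]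
  [Fintype ι] [MeasurableSpace β] {Y : ι → Ω → β} {P : β → Prop} [DecidablePred P]
  {p : ℝ}

theorem measurableSet_filter_eq (hY : ∀ i, Measurable (Y i)) (hP : MeasurableSet {x | P x})
    (T : Finset ι) : MeasurableSet {ω | ({i | P (Y i ω)} : Finset ι) = T} := by
  simp only [Finset.ext_iff, mem_filter, mem_univ, true_and, Set.ofPred_forall]
  refine MeasurableSet.iInter fun i => ?_
  by_cases hi : i ∈ T
  · simpa [hi] using hY i hP
  · simp only [hi, iff_false]
    exact (hY i hP).compl

theorem ProbabilityTheory.iIndepFun.measureReal_filter_eq (hind : iIndepFun Y μ)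
    (hY : ∀ i, Measurable (Y i)) (hP : MeasurableSet {x | P x})
    (hp : ∀ i, μ.real (Y i ⁻¹' {x | P x}) = p) (T : Finset ι) :
    μ.real {ω | ({i | P (Y i ω)} : Finset ι) = T}
      = p ^ #T * (1 - p) ^ (Fintype.card ι - #T) := by
  classical
  let S i : Set β := if i ∈ T then {x | P x} else {x | P x}ᶜ
  have hS : ∀ i, MeasurableSet (S i) := fun i => by
    by_cases hi : i ∈ T <;> simp [S, hi, hP, hP.compl]
  have hevent : {ω | ({i | P (Y i ω)} : Finset ι) = T}
      = ⋂ i ∈ (univ : Finset ι), Y i ⁻¹' S i := by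
    ext ω
    simp only [Finset.ext_iff, mem_filter, mem_univ, true_and, Set.mem_ofPred_eq, Set.mem_iInter]
    refine forall_congr' fun i => ?_
    by_cases hi : i ∈ T <;> simp [S, hi]
  have hfactor : ∀ i, μ.real (Y i ⁻¹' S i) = if i ∈ T then p else 1 - p := fun i => by
    by_cases hi : i ∈ T
    · simp only [S, hi, if_true, hp]
    · simp only [S, hi, if_false, Set.preimage_compl]
      rw [probReal_compl_eq_one_sub (hY i hP), hp]
  rw [hevent, measureReal_def, hind.measure_inter_preimage_eq_mul _ (fun i _ => hS i),
    ENNReal.toReal_prod]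
  simp only [← measureReal_def, hfactor]
  rw [prod_ite, prod_const, prod_const, filter_mem_eq_inter, univ_inter, filter_not,
    filter_mem_eq_inter, univ_inter, card_univ_sdiff]

theorem ProbabilityTheory.iIndepFun.measureReal_card_filter_eq (hind : iIndepFun Y μ)
    (hY : ∀ i, Measurable (Y i)) (hP : MeasurableSet {x | P x})
    (hp : ∀ i, μ.real (Y i ⁻¹' {x | P x}) = p) (j : ℕ) :
    μ.real {ω | #{i | P (Y i ω)} = j}
      = (Fintype.card ι).choose j * p ^ j * (1 - p) ^ (Fintype.card ι - j) := by
  have hunion : {ω | #{i | P (Y i ω)} = j}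
      = ⋃ T ∈ powersetCard j (univ : Finset ι), {ω | ({i | P (Y i ω)} : Finset ι) = T} := by
    ext ω
    simp
  rw [hunion, measureReal_biUnion_finset _ (fun T _ => measurableSet_filter_eq hY hP T),
    sum_congr rfl fun T hT => by
      rw [hind.measureReal_filter_eq hY hP hp, (mem_powersetCard.mp hT).2],
    sum_const, card_powersetCard, card_univ, nsmul_eq_mul, mul_assoc]
  intro T _ T' _ hTT'
  exact Set.disjoint_left.mpr fun ω hT hT' => hTT' (hT.symm.trans hT')

theorem ProbabilityTheory.iIndepFun.measureReal_le_card_filter_le_sum (hind : iIndepFun Y μ)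
    (hY : ∀ i, Measurable (Y i))
    (hP : MeasurableSet {x | P x}) (hp : ∀ i, μ.real (Y i ⁻¹' {x | P x}) = p) (k : ℕ) :
    μ.real {ω | k ≤ #{i | P (Y i ω)}}
      ≤ ∑ j ∈ Ico k (Fintype.card ι + 1),
          (Fintype.card ι).choose j * p ^ j * (1 - p) ^ (Fintype.card ι - j) := by
  have hunion : {ω | k ≤ #{i | P (Y i ω)}}
      = ⋃ j ∈ Ico k (Fintype.card ι + 1), {ω | #{i | P (Y i ω)} = j} := by
    ext ω
    simp [card_le_univ]
  rw [hunion]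
  refine (measureReal_biUnion_finset_le _ _).trans_eq (sum_congr rfl fun j _ => ?_)
  exact hind.measureReal_card_filter_eq hY hP hp j

end CountingEvents

theorem measureReal_preimage_eq_of_map_eq {Ω β : Type*} [MeasurableSpace Ω] {μ : Measure Ω}
    [MeasurableSpace β] {X : ℕ → Ω → β} (hmeas : ∀ i, Measurable (X i))
    (hident : ∀ i, μ.map (X i) = μ.map (X 0)) {S : Set β} (hS : MeasurableSet S) (i : ℕ) :
    μ.real (X i ⁻¹' S) = μ.real (X 0 ⁻¹' S) :=
  congrArg ENNReal.toReal
    (IdentDistrib.measure_mem_eq ⟨(hmeas i).aemeasurable, (hmeas 0).aemeasurable, hident i⟩ hS)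

section majorityEvent

variable {Ω β : Type*} [MeasurableSpace Ω] {μ : Measure Ω} [IsProbabilityMeasure μ]
  [MeasurableSpace β] {X : ℕ → Ω → β} {P : β → Prop} [DecidablePred P] {p r : ℝ}

theorem div_sqrt_mul_pow_le_measureReal_majorityEvent (hmeas : ∀ i, Measurable (X i))
    (hindep : iIndepFun X μ) (hident : ∀ i, μ.map (X i) = μ.map (X 0))
    (hP : MeasurableSet {x | P x}) (hp : μ.real (X 0 ⁻¹' {x | P x}) = p) (hr0 : 0 < r)
    (hr : r ^ 2 = 4 * (p * (1 - p))) (m : ℕ) :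
    p / r / √(2 * m + 1) * r ^ (2 * m + 1) ≤ μ.real (majorityEvent X P m) := by
  have hp0 : 0 ≤ p := hp ▸ measureReal_nonneg
  have hp1 : 0 ≤ 1 - p := sub_nonneg.mpr (hp ▸ measureReal_le_one)
  have hY : iIndepFun (fun i : Fin (2 * m + 1) => X i) μ := hindep.precomp Fin.val_injective
  have hpY : ∀ i : Fin (2 * m + 1), μ.real (X i ⁻¹' {x | P x}) = p := fun i =>
    (measureReal_preimage_eq_of_map_eq hmeas hident hP i).trans hp
  have hcount := hY.measureReal_card_filter_eq (fun i => hmeas i) hP hpY (m + 1)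
  simp only [Fintype.card_fin, show 2 * m + 1 - (m + 1) = m by omega] at hcount
  calc p / r / √(2 * m + 1) * r ^ (2 * m + 1)
      = p * (p * (1 - p)) ^ m * (4 ^ m / √(2 * m + 1)) := by
        rw [show p / r / √(2 * m + 1) * r ^ (2 * m + 1) = p * (r ^ 2) ^ m / √(2 * m + 1) by
          field_simp; ring, hr, mul_pow]
        ring
    _ ≤ p * (p * (1 - p)) ^ m * (2 * m + 1).choose (m + 1) := by
        gcongr
        exact four_pow_div_sqrt_le_choose m
    _ = μ.real {ω | #{i : Fin (2 * m + 1) | P (X i ω)} = m + 1} := by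
        rw [hcount, mul_pow]
        ring
    _ ≤ μ.real (majorityEvent X P m) := measureReal_mono fun ω hω => hω.symm.le

theorem measureReal_majorityEvent_le_div_sqrt_mul_pow {q : ℝ} (hmeas : ∀ i, Measurable (X i))
    (hindep : iIndepFun X μ) (hident : ∀ i, μ.map (X i) = μ.map (X 0))
    (hP : MeasurableSet {x | P x}) (hp : μ.real (X 0 ⁻¹' {x | P x}) = p) (hpq : p ≤ q)
    (hq : q < 1 / 2) (hr : r ^ 2 = 4 * (q * (1 - q))) (m : ℕ) :
    μ.real (majorityEvent X P m) ≤ r / (2 * (1 - 2 * q)) / √(2 * m + 1) * r ^ (2 * m + 1) := by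
  have hp0 : 0 ≤ p := hp ▸ measureReal_nonneg
  have hY : iIndepFun (fun i : Fin (2 * m + 1) => X i) μ := hindep.precomp Fin.val_injective
  have hpY : ∀ i : Fin (2 * m + 1), μ.real (X i ⁻¹' {x | P x}) = p := fun i =>
    (measureReal_preimage_eq_of_map_eq hmeas hident hP i).trans hp
  have htail := hY.measureReal_le_card_filter_le_sum (fun i => hmeas i) hP hpY (m + 1)
  simp only [Fintype.card_fin] at htail
  calc μ.real (majorityEvent X P m)
      ≤ ∑ j ∈ Ico (m + 1) (2 * m + 2),
          ((2 * m + 1).choose j : ℝ) * p ^ j * (1 - p) ^ (2 * m + 1 - j) := htail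
    _ ≤ (2 * m + 1).choose (m + 1) * (p * (1 - p)) ^ (m + 1) / (1 - 2 * p) :=
        sum_binomial_tail_le hp0 (hpq.trans_lt hq) m
    _ ≤ 2 * 4 ^ m / √(2 * m + 1) * (q * (1 - q)) ^ (m + 1) / (1 - 2 * q) := by
        have hvar0 : 0 ≤ p * (1 - p) := by nlinarith
        have hvar : p * (1 - p) ≤ q * (1 - q) := by nlinarith
        have hvar0' : 0 ≤ q * (1 - q) := hvar0.trans hvar
        have hq2 : 0 < 1 - 2 * q := by linarith
        gcongr ?_ * ?_ ^ _ / (1 - 2 * ?_)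
        exact choose_le_two_mul_four_pow_div_sqrt m
    _ = r / (2 * (1 - 2 * q)) / √(2 * m + 1) * r ^ (2 * m + 1) := by
        rw [show r / (2 * (1 - 2 * q)) / √(2 * m + 1) * r ^ (2 * m + 1)
            = (r ^ 2) ^ (m + 1) / (2 * (1 - 2 * q)) / √(2 * m + 1) by ring, hr]
        simp only [mul_pow]
        have : 1 - 2 * q ≠ 0 := by linarith
        field_simp
        ring

end majorityEvent

theorem stmt_4_general {Ω : Type*} [MeasurableSpace Ω] (μ : Measure Ω) [IsProbabilityMeasure μ]
    (X : ℕ → Ω → ℝ) (hmeas : ∀ i, Measurable (X i))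
    (hindep : iIndepFun X μ)
    (hident : ∀ i, Measure.map (X i) μ = Measure.map (X 0) μ)
    (a b : ℝ)
    (pL pU pmax r : ℝ)
    (hpL : pL = (μ {ω | X 0 ω < a}).toReal)
    (hpU : pU = (μ {ω | b < X 0 ω}).toReal)
    (hpmax : pmax = max pL pU)
    (hr : r = 2 * Real.sqrt (pmax * (1 - pmax)))
    (hpmax0 : 0 < pmax) (hpmax1 : pmax < 1 / 2) :
    ∃ c₁ c₂ : ℝ, 0 < c₁ ∧ 0 < c₂ ∧ ∀ t : ℕ, Odd t → 0 < t →
      c₁ / Real.sqrt t * r ^ t ≤ (μ (errorEvent X a b t)).toReal ∧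
        (μ (errorEvent X a b t)).toReal ≤ c₂ / Real.sqrt t * r ^ t := by
  have hvar : 0 < pmax * (1 - pmax) := by nlinarith
  have hr0 : 0 < r := hr ▸ by positivity
  have hr2 : r ^ 2 = 4 * (pmax * (1 - pmax)) := by
    rw [hr, mul_pow, Real.sq_sqrt hvar.le]; ring
  refine ⟨pmax / r, r / (1 - 2 * pmax), by positivity, div_pos hr0 (by linarith), ?_⟩
  rintro t ⟨m, rfl⟩ -
  push_cast
  simp only [← measureReal_def, errorEvent_eq_majorityEvent_union]
  have hbelow := measureReal_majorityEvent_le_div_sqrt_mul_pow hmeas hindep hident measurableSet_Iio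
    hpL.symm (hpmax ▸ le_max_left pL pU) hpmax1 hr2 m
  have habove := measureReal_majorityEvent_le_div_sqrt_mul_pow hmeas hindep hident measurableSet_Ioi
    hpU.symm (hpmax ▸ le_max_right pL pU) hpmax1 hr2 m
  constructor
  · rcases max_choice pL pU with h | h
    · exact (div_sqrt_mul_pow_le_measureReal_majorityEvent hmeas hindep hident measurableSet_Iio
        (hpL.symm.trans (h ▸ hpmax).symm) hr0 hr2 m).trans (measureReal_mono Set.subset_union_left)
    · exact (div_sqrt_mul_pow_le_measureReal_majorityEvent hmeas hindep hident measurableSet_Ioi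
        (hpU.symm.trans (h ▸ hpmax).symm) hr0 hr2 m).trans (measureReal_mono Set.subset_union_right)
  · calc _ ≤ _ := measureReal_union_le _ _
      _ ≤ _ := add_le_add hbelow habove
      _ = _ := by
        have : 1 - 2 * pmax ≠ 0 := by linarith
        field_simp
        ring

theorem stmt_4 {Ω : Type*} [MeasurableSpace Ω] (μ : Measure Ω) [IsProbabilityMeasure μ]
    (X : ℕ → Ω → ℝ) (hmeas : ∀ i, Measurable (X i))
    (hindep : iIndepFun X μ)
    (hident : ∀ i, Measure.map (X i) μ = Measure.map (X 0) μ)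
    (a b : ℝ) (hab : a ≤ b)
    (pL pU pmax r : ℝ)
    (hpL : pL = (μ {ω | X 0 ω < a}).toReal)
    (hpU : pU = (μ {ω | b < X 0 ω}).toReal)
    (hpmax : pmax = max pL pU)
    (hr : r = 2 * Real.sqrt (pmax * (1 - pmax)))
    (hpmax0 : 0 < pmax) (hpmax1 : pmax < 1 / 2) :
    ∃ c₁ c₂ : ℝ, 0 < c₁ ∧ 0 < c₂ ∧ ∀ t : ℕ, Odd t → 0 < t →
      c₁ / Real.sqrt t * r ^ t ≤ (μ (errorEvent X a b t)).toReal ∧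
        (μ (errorEvent X a b t)).toReal ≤ c₂ / Real.sqrt t * r ^ t :=
  stmt_4_general μ X hmeas hindep hident a b pL pU pmax r hpL hpU hpmax hr hpmax0 hpmax1
end

section
/- Let ε be a real number with √2 − 1 ≤ ε < 1, and let Z be a nonnegative real-valued random variable with finite second moment satisfying σ²[Z] ≤ E[Z]. If E[Z] ≥ 4·pivot(ε), then P(Z < thresh(ε)) ≤ 1/62.5. -/
/-!
The bound comes from Cantelli's one-sided Chebyshev inequality
`P(Z ≤ E[Z] - a) ≤ σ²/(σ² + a²)`, itself Markov's inequality for `(Z - E[Z] - σ²/a)²`.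
For `ε < 1` we have `ε/(1+ε) ≤ 1/2` and `pivot ε > 4 · 9.84`, so
`thresh ε ≤ (3/2)·pivot ε ≤ (3/8)·E[Z]`. The deviation `a = E[Z] - thresh ε` is then at least
`(5/8)·E[Z]`, and `a² ≥ (25/64)·E[Z]² ≥ 61.5·E[Z] ≥ 61.5·σ²` because `E[Z] ≥ 157.44`.
-/

open MeasureTheory ProbabilityTheory

/-- `pivot ε = 9.84·(1 + 1/ε)²`. -/
noncomputable def pivot (ε : ℝ) : ℝ := 9.84 * (1 + 1 / ε) ^ 2

/-- `thresh ε = 9.84·(1 + ε/(1+ε))·(1 + 1/ε)²`. -/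
noncomputable def thresh (ε : ℝ) : ℝ := 9.84 * (1 + ε / (1 + ε)) * (1 + 1 / ε) ^ 2

namespace ProbabilityTheory

variable {Ω : Type*} [MeasurableSpace Ω] {μ : Measure Ω} [IsProbabilityMeasure μ] {X : Ω → ℝ}

lemma integral_sub_const_sq (hX : MemLp X 2 μ) (c : ℝ) :
    ∫ ω, (X ω - c) ^ 2 ∂μ = Var[X; μ] + (μ[X] - c) ^ 2 := by
  have h := variance_eq_sub (hX.sub (memLp_const c))
  rw [show X - (fun _ ↦ c) = fun ω ↦ X ω - c from rfl,
    variance_sub_const hX.aestronglyMeasurable, integral_sub (hX.integrable one_le_two)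
      (integrable_const c), integral_const, probReal_univ, one_smul] at h
  rw [h]
  simp only [Pi.pow_apply]
  ring

/-- Markov's inequality for `(X - μ[X] - u) ^ 2`, for an arbitrary shift `u`. -/
lemma measureReal_le_sub_le_of_shift (hX : MemLp X 2 μ) {a u : ℝ} (hau : 0 < a + u) :
    μ.real {ω | X ω ≤ μ[X] - a} ≤ (Var[X; μ] + u ^ 2) / (a + u) ^ 2 := by
  have hsq : 0 < (a + u) ^ 2 := by positivity
  have hsub : {ω | X ω ≤ μ[X] - a} ⊆ {ω | (a + u) ^ 2 ≤ (X ω - (μ[X] + u)) ^ 2} := by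
    intro ω (hω : X ω ≤ μ[X] - a)
    show (a + u) ^ 2 ≤ (X ω - (μ[X] + u)) ^ 2
    nlinarith
  have hint : Integrable (fun ω ↦ (X ω - (μ[X] + u)) ^ 2) μ :=
    (hX.sub (memLp_const _)).integrable_sq
  have markov := mul_meas_ge_le_integral_of_nonneg (.of_forall fun ω ↦ sq_nonneg _) hint
    ((a + u) ^ 2)
  rw [integral_sub_const_sq hX, sub_add_cancel_left, even_two.neg_pow] at markov
  rw [le_div_iff₀ hsq, mul_comm]
  exact (mul_le_mul_of_nonneg_left (measureReal_mono hsub) hsq.le).trans markov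

/-- **Cantelli's inequality**. -/
theorem measureReal_le_sub_le_variance_div (hX : MemLp X 2 μ) {a : ℝ} (ha : 0 < a) :
    μ.real {ω | X ω ≤ μ[X] - a} ≤ Var[X; μ] / (Var[X; μ] + a ^ 2) := by
  have hv := variance_nonneg X μ
  -- the shift `u = Var[X] / a` minimises the bound of `measureReal_le_sub_le_of_shift`
  convert measureReal_le_sub_le_of_shift hX (u := Var[X; μ] / a) (by positivity) using 1
  field_simp
  ring

end ProbabilityTheory

lemma lt_pivot {ε : ℝ} (h0 : 0 < ε) (h1 : ε < 1) : 39.36 < pivot ε := by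
  have : 1 < 1 / ε := by rw [lt_div_iff₀ h0]; linarith
  unfold pivot
  nlinarith

lemma thresh_le_pivot {ε : ℝ} (h0 : 0 < ε) (h1 : ε ≤ 1) : thresh ε ≤ 3 / 2 * pivot ε := by
  have : ε / (1 + ε) ≤ 1 / 2 := by rw [div_le_div_iff₀ (by linarith) (by norm_num)]; linarith
  unfold thresh pivot
  nlinarith [sq_nonneg (1 + 1 / ε)]

theorem stmt_12_general {Ω : Type*} [MeasurableSpace Ω] (μ : Measure Ω) [IsProbabilityMeasure μ]
    (ε : ℝ) (hlo : Real.sqrt 2 - 1 ≤ ε) (hhi : ε < 1)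
    (Z : Ω → ℝ) (hL2 : MemLp Z 2 μ)
    (hvar : variance Z μ ≤ ∫ x, Z x ∂μ)
    (hE : 4 * pivot ε ≤ ∫ x, Z x ∂μ) :
    (μ {ω | Z ω < thresh ε}).toReal ≤ 1 / 62.5 := by
  have hε : 0 < ε := by linarith [Real.one_lt_sqrt_two]
  have hpivot := lt_pivot hε hhi
  have hthresh := thresh_le_pivot hε hhi.le
  set m := μ[Z]
  set v := Var[Z; μ]
  have hm : 157.44 < m := by linarith
  have ha : 5 / 8 * m ≤ m - thresh ε := by linarith
  have hsub : {ω | Z ω < thresh ε} ⊆ {ω | Z ω ≤ m - (m - thresh ε)} := by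
    intro ω (hω : Z ω < thresh ε)
    show Z ω ≤ m - (m - thresh ε)
    linarith
  have hav : 61.5 * v ≤ (m - thresh ε) ^ 2 := by nlinarith
  calc (μ {ω | Z ω < thresh ε}).toReal ≤ μ.real {ω | Z ω ≤ m - (m - thresh ε)} :=
        measureReal_mono hsub
    _ ≤ v / (v + (m - thresh ε) ^ 2) :=
        measureReal_le_sub_le_variance_div hL2 (by linarith)
    _ ≤ 1 / 62.5 := by
        rw [div_le_div_iff₀ (by nlinarith [variance_nonneg Z μ]) (by norm_num)]
        linarith

theorem stmt_12 {Ω : Type*} [MeasurableSpace Ω] (μ : Measure Ω) [IsProbabilityMeasure μ]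
    (ε : ℝ) (hlo : Real.sqrt 2 - 1 ≤ ε) (hhi : ε < 1)
    (Z : Ω → ℝ) (hZnonneg : ∀ ω, 0 ≤ Z ω) (hL2 : MemLp Z 2 μ)
    (hvar : variance Z μ ≤ ∫ x, Z x ∂μ)
    (hE : 4 * pivot ε ≤ ∫ x, Z x ∂μ) :
    (μ {ω | Z ω < thresh ε}).toReal ≤ 1 / 62.5 :=
  stmt_12_general μ ε hlo hhi Z hL2 hvar hE
end

section
/- Let ε be a real number with √2 − 1 ≤ ε < 1, and let Z be a nonnegative real-valued random variable with finite second moment satisfying σ²[Z] ≤ E[Z]. If E[Z] ≥ 2·pivot(ε), then P(Z < E[Z]/(1+ε)) ≤ 1/20.68. -/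
open MeasureTheory ProbabilityTheory

/-!
Apply Cantelli's one-sided Chebyshev inequality `P(Z ≤ E[Z] - t) ≤ σ² / (σ² + t²)` with
`t = E[Z]·ε/(1+ε)`, so that `E[Z] - t = E[Z]/(1+ε)`. Since `σ² ≤ E[Z]`, the bound is at most `1/20.68` as soon as
`t² ≥ 19.68·E[Z]`, and this is exactly the hypothesis `E[Z] ≥ 2·pivot ε = 19.68·((1+ε)/ε)²`.
-/

namespace ProbabilityTheory

variable {Ω : Type*} [MeasurableSpace Ω] {μ : Measure Ω} [IsProbabilityMeasure μ] {X : Ω → ℝ}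

lemma integral_sq_eq_variance_add_sq (hX : MemLp X 2 μ) :
    ∫ ω, X ω ^ 2 ∂μ = Var[X; μ] + μ[X] ^ 2 := by
  rw [variance_eq_sub hX]
  simp only [Pi.pow_apply, sub_add_cancel]

/-- **Cantelli's inequality**. -/
theorem measureReal_le_integral_sub_le_variance_div (hX : MemLp X 2 μ) {t : ℝ} (ht : 0 < t) :
    μ.real {ω | X ω ≤ μ[X] - t} ≤ Var[X; μ] / (Var[X; μ] + t ^ 2) := by
  set m := μ[X]
  set v := Var[X; μ]
  have hv : 0 ≤ v := variance_nonneg X μ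
  -- Markov's inequality for `(m + u - X)²`, with the shift `u = v / t` chosen optimally.
  set u := v / t
  have hu : 0 ≤ u := by positivity
  have hY : MemLp (fun ω ↦ m + u - X ω) 2 μ := (memLp_const (m + u)).sub hX
  have hY_mean : μ[fun ω ↦ m + u - X ω] = u := by
    rw [integral_sub (integrable_const _) (hX.integrable one_le_two), integral_const]
    simp [m]
  have hY_sq : ∫ ω, (m + u - X ω) ^ 2 ∂μ = v + u ^ 2 := by
    rw [integral_sq_eq_variance_add_sq hY, hY_mean,
      variance_const_sub hX.aestronglyMeasurable]
  have markov := mul_meas_ge_le_integral_of_nonneg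
    (ae_of_all μ fun ω ↦ sq_nonneg (m + u - X ω)) hY.integrable_sq ((t + u) ^ 2)
  rw [hY_sq] at markov
  have hsub : {ω | X ω ≤ m - t} ⊆ {ω | (t + u) ^ 2 ≤ (m + u - X ω) ^ 2} :=
    fun ω (hω : X ω ≤ m - t) ↦
      pow_le_pow_left₀ (by positivity) (show t + u ≤ m + u - X ω by linarith) 2
  have hopt : (v + u ^ 2) / (t + u) ^ 2 = v / (v + t ^ 2) := by
    have hut : u * t = v := div_mul_cancel₀ v ht.ne'
    rw [div_eq_div_iff (by positivity) (by positivity)]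
    linear_combination (u * t - v) * hut
  calc μ.real {ω | X ω ≤ m - t}
      ≤ μ.real {ω | (t + u) ^ 2 ≤ (m + u - X ω) ^ 2} := measureReal_mono hsub
    _ ≤ (v + u ^ 2) / (t + u) ^ 2 := by rw [le_div_iff₀ (by positivity)]; linarith
    _ = v / (v + t ^ 2) := hopt

end ProbabilityTheory

lemma div_add_le_one_div_one_add {v s c : ℝ} (hv : 0 ≤ v) (hc : 0 < c) (h : c * v ≤ s) :
    v / (v + s) ≤ 1 / (1 + c) := by
  rcases hv.eq_or_lt with rfl | hv
  · simp only [zero_div]; positivity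
  rw [div_le_div_iff₀ (by nlinarith) (by linarith)]
  linarith

lemma two_mul_pivot {ε : ℝ} (hε : ε ≠ 0) : 2 * pivot ε = 19.68 * ((1 + ε) / ε) ^ 2 := by
  unfold pivot
  field_simp
  ring

lemma mul_le_sq_of_two_mul_pivot_le {ε m : ℝ} (hε : 0 < ε) (hm : 2 * pivot ε ≤ m) :
    19.68 * m ≤ (m * ε / (1 + ε)) ^ 2 := by
  rw [two_mul_pivot hε.ne', div_pow, mul_div_assoc', div_le_iff₀ (by positivity)] at hm
  rw [div_pow, le_div_iff₀ (by positivity)]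
  have hm0 : 0 ≤ m := by
    by_contra! h
    nlinarith [sq_nonneg (1 + ε)]
  nlinarith [mul_le_mul_of_nonneg_left hm hm0]

theorem stmt_13_general {Ω : Type*} [MeasurableSpace Ω] (μ : Measure Ω) [IsProbabilityMeasure μ]
    (ε : ℝ) (hlo : Real.sqrt 2 - 1 ≤ ε)
    (Z : Ω → ℝ) (hL2 : MemLp Z 2 μ)
    (hvar : variance Z μ ≤ ∫ x, Z x ∂μ)
    (hE : 2 * pivot ε ≤ ∫ x, Z x ∂μ) :
    (μ {ω | Z ω < (∫ x, Z x ∂μ) / (1 + ε)}).toReal ≤ 1 / 20.68 := by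
  have hε : 0 < ε := (sub_pos.2 Real.one_lt_sqrt_two).trans_le hlo
  set m := ∫ x, Z x ∂μ
  have hm : 0 < m := lt_of_lt_of_le (by unfold pivot; positivity) hE
  set t := m * ε / (1 + ε)
  have hsub : {ω | Z ω < m / (1 + ε)} ⊆ {ω | Z ω ≤ m - t} := by
    have : m / (1 + ε) = m - t := by simp only [t]; field_simp; ring
    intro ω (hω : Z ω < m / (1 + ε))
    exact (this ▸ hω).le
  calc μ.real {ω | Z ω < m / (1 + ε)}
      ≤ μ.real {ω | Z ω ≤ m - t} := measureReal_mono hsub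
    _ ≤ Var[Z; μ] / (Var[Z; μ] + t ^ 2) :=
      measureReal_le_integral_sub_le_variance_div hL2 (by positivity)
    _ ≤ 1 / (1 + 19.68) := div_add_le_one_div_one_add (variance_nonneg Z μ) (by norm_num)
      (by linarith [mul_le_sq_of_two_mul_pivot_le hε hE])
    _ = 1 / 20.68 := by norm_num

theorem stmt_13 {Ω : Type*} [MeasurableSpace Ω] (μ : Measure Ω) [IsProbabilityMeasure μ]
    (ε : ℝ) (hlo : Real.sqrt 2 - 1 ≤ ε) (hhi : ε < 1)
    (Z : Ω → ℝ) (hZnonneg : ∀ ω, 0 ≤ Z ω) (hL2 : MemLp Z 2 μ)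
    (hvar : variance Z μ ≤ ∫ x, Z x ∂μ)
    (hE : 2 * pivot ε ≤ ∫ x, Z x ∂μ) :
    (μ {ω | Z ω < (∫ x, Z x ∂μ) / (1 + ε)}).toReal ≤ 1 / 20.68 :=
  stmt_13_general μ ε hlo Z hL2 hvar hE
end
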